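/- Let 2 ≤ k ≤ d ≤ d' be integers with k not dividing d', and write d' = s·k + r with 0 < r < k (so s ≥ 1). Then for every integer t with 0 ≤ t ≤ k−r−1 and d−t ≥ k, there exists an s·k·(d−t)-number USV1Bk in M_{d×d'}; moreover one can be chosen consisting of matrices supported on the top-left (d−t) × s·k submatrix. Equivalently, there is an s·k·(d−t)-number special unextendible entangled basis with Schmidt number k (SUEBk) in ℂ^d ⊗ ℂ^{d'}. -/
import Mathlib

open Matrix

/-- `A` is a `k`-singular-value-1 matrix. -/
def IsSV1 {m n : Type*} [Fintype m] [Fintype n] (k : ℕ) (A : Matrix m n ℂ) : Prop :=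
  (Aᴴ * A) * (Aᴴ * A) = Aᴴ * A ∧ A.rank = k

namespace SUEBaux

open scoped ComplexOrder

noncomputable def ω (k : ℕ) : ℂ := Complex.exp (2 * Real.pi * Complex.I / k)

lemma ω_ne_zero (k : ℕ) : ω k ≠ 0 := Complex.exp_ne_zero _

lemma ω_prim {k : ℕ} (hk : 0 < k) : IsPrimitiveRoot (ω k) k :=
  Complex.isPrimitiveRoot_exp k hk.ne'

lemma star_ω (k : ℕ) : star (ω k) = (ω k)⁻¹ := by
  rw [ω, ← Complex.exp_neg]
  rw [show star (Complex.exp (2 * ↑Real.pi * Complex.I / ↑k))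
      = (starRingEnd ℂ) (Complex.exp (2 * ↑Real.pi * Complex.I / ↑k)) from rfl,
    ← Complex.exp_conj]
  congr 1
  simp [Complex.ext_iff, neg_div]

lemma geom {k : ℕ} (hk : 0 < k) (c : ℤ) (hc : c.natAbs < k) :
    ∑ j ∈ Finset.range k, (ω k ^ c) ^ j = if c = 0 then (k : ℂ) else 0 := by
  by_cases h : c = 0
  · simp [h]
  · rw [if_neg h]
    have hζ : ω k ^ c ≠ 1 := by
      intro h1
      rw [(ω_prim hk).zpow_eq_one_iff_dvd] at h1
      have h2 : k ∣ c.natAbs := Int.natCast_dvd_natCast.mp ((Int.dvd_natAbs).mpr h1)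
      have h3 : c.natAbs ≠ 0 := Int.natAbs_ne_zero.mpr h
      have := Nat.le_of_dvd (Nat.pos_of_ne_zero h3) h2
      omega
    have hk1 : (ω k ^ c) ^ k = 1 := by
      rw [← zpow_natCast, ← _root_.zpow_mul, mul_comm, _root_.zpow_mul,
        (ω_prim hk).zpow_eq_one, _root_.one_zpow]
    have hgs := geom_sum_mul (ω k ^ c) k
    rw [hk1, sub_self] at hgs
    rcases mul_eq_zero.mp hgs with h' | h'
    · exact h'
    · exact absurd (sub_eq_zero.mp h') hζ

/-- the key character-orthogonality sum -/
lemma coeff {k : ℕ} (hk : 0 < k) {u v : ℕ} (hu : u < k) (hv : v < k) :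
    ∑ i : Fin k, star (ω k ^ (u * (i : ℕ))) * ω k ^ (v * (i : ℕ))
      = if u = v then (k : ℂ) else 0 := by
  have hterm : ∀ i : Fin k,
      star (ω k ^ (u * (i : ℕ))) * ω k ^ (v * (i : ℕ))
        = (ω k ^ ((v : ℤ) - u)) ^ (i : ℕ) := by
    intro i
    rw [star_pow, star_ω, inv_pow, ← zpow_natCast (ω k) (v * (i : ℕ)),
      ← zpow_natCast (ω k) (u * (i : ℕ)), ← _root_.zpow_neg, mul_comm,
      ← zpow_add₀ (ω_ne_zero k), ← _root_.zpow_natCast (ω k ^ ((v : ℤ) - u)),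
      ← _root_.zpow_mul]
    congr 1
    push_cast
    ring
  rw [Finset.sum_congr rfl (fun i _ => hterm i),
    Fin.sum_univ_eq_sum_range (fun i => (ω k ^ ((v : ℤ) - u)) ^ i) k,
    geom hk _ (by omega)]
  have h2 : ((v : ℤ) - u = 0) ↔ (u = v) := by omega
  simp [h2]

lemma mod_cancel {m a b c : ℕ} (hb : b < m) (hc : c < m)
    (h : (a + b) % m = (a + c) % m) : b = c := by
  have h2 : b ≡ c [MOD m] := Nat.ModEq.add_left_cancel' a h
  rwa [Nat.ModEq, Nat.mod_eq_of_lt hb, Nat.mod_eq_of_lt hc] at h2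

lemma mod_cancel' {m a b c : ℕ} (hb : b < m) (hc : c < m)
    (h : (b + a) % m = (c + a) % m) : b = c := by
  have h2 : b ≡ c [MOD m] := Nat.ModEq.add_right_cancel' a h
  rwa [Nat.ModEq, Nat.mod_eq_of_lt hb, Nat.mod_eq_of_lt hc] at h2

lemma lt2 {b s k d' : ℕ} (hb : b < s) (hsk : s * k ≤ d') {j : ℕ} (hj : j < k) :
    b * k + j < d' := by
  have h2 : (b + 1) * k ≤ s * k := Nat.mul_le_mul_right k hb
  have : (b + 1) * k = b * k + k := by ring
  omega

/-- the basic matrices -/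
noncomputable def Amat (k s m d d' : ℕ) (b a p : ℕ) : Matrix (Fin d) (Fin d') ℂ :=
  Matrix.of fun x y =>
    if ((x : ℕ) < m ∧ (y : ℕ) < s * k ∧ (y : ℕ) / k = b ∧ (x : ℕ) = (a + (y : ℕ) % k) % m)
    then ω k ^ (p * ((y : ℕ) % k)) else 0

lemma Amat_apply_zero {k s m d d' b a p : ℕ} {x : Fin d} {y : Fin d'}
    (h : m ≤ (x : ℕ) ∨ s * k ≤ (y : ℕ)) : Amat k s m d d' b a p x y = 0 := by
  rw [Amat, Matrix.of_apply, if_neg]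
  rintro ⟨h1, h2, -, -⟩
  omega

lemma trace_Amat {k s m d d' : ℕ} (hk : 0 < k) (hm0 : 0 < m) (hmd : m ≤ d)
    (hsk : s * k ≤ d') {b : ℕ} (hb : b < s) (a p : ℕ) (B : Matrix (Fin d) (Fin d') ℂ) :
    ((Amat k s m d d' b a p)ᴴ * B).trace =
      ∑ j : Fin k, star (ω k ^ (p * (j : ℕ))) *
        B ⟨(a + (j : ℕ)) % m, lt_of_lt_of_le (Nat.mod_lt _ hm0) hmd⟩
          ⟨b * k + (j : ℕ), lt2 hb hsk j.isLt⟩ := by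
  have h1 : ((Amat k s m d d' b a p)ᴴ * B).trace
      = ∑ y : Fin d', ∑ x : Fin d, star (Amat k s m d d' b a p x y) * B x y := by
    simp [Matrix.trace, Matrix.mul_apply, Matrix.conjTranspose_apply, Matrix.diag]
  rw [h1]
  refine (Finset.sum_of_injOn (fun j : Fin k => (⟨b * k + (j : ℕ), lt2 hb hsk j.isLt⟩ : Fin d'))
    ?_ ?_ ?_ ?_).symm
  · intro j _ j' _ h
    have : b * k + (j : ℕ) = b * k + (j' : ℕ) := congrArg Fin.val h
    exact Fin.ext (by omega)
  · intro j _; simp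
  · intro y _ hy
    apply Finset.sum_eq_zero
    intro x _
    rw [Amat, Matrix.of_apply]
    by_cases hC : ((x : ℕ) < m ∧ (y : ℕ) < s * k ∧ (y : ℕ) / k = b ∧
        (x : ℕ) = (a + (y : ℕ) % k) % m)
    · exfalso
      apply hy
      refine ⟨⟨(y : ℕ) % k, Nat.mod_lt _ hk⟩, by simp, ?_⟩
      apply Fin.ext
      show b * k + (y : ℕ) % k = (y : ℕ)
      rw [← hC.2.2.1]
      exact Nat.div_add_mod' _ _
    · simp [hC]
  · intro j _
    have hdiv : (b * k + (j : ℕ)) / k = b := by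
      rw [mul_comm, Nat.mul_add_div hk, Nat.div_eq_of_lt j.isLt, add_zero]
    have hmod : (b * k + (j : ℕ)) % k = (j : ℕ) := by
      rw [Nat.mul_add_mod', Nat.mod_eq_of_lt j.isLt]
    rw [Finset.sum_eq_single (⟨(a + (j : ℕ)) % m, lt_of_lt_of_le (Nat.mod_lt _ hm0) hmd⟩ : Fin d)]
    · rw [Amat, Matrix.of_apply, if_pos]
      · simp only [hmod]
      · refine ⟨Nat.mod_lt _ hm0, lt2 hb le_rfl j.isLt, hdiv, by simp [hmod]⟩
    · intro x _ hx
      rw [Amat, Matrix.of_apply, if_neg, star_zero, zero_mul]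
      rintro ⟨-, -, -, h4⟩
      exact hx (Fin.ext (by simpa [hmod] using h4))
    · intro h; exact absurd (Finset.mem_univ _) h

lemma Amat_conj_mul_self {k s m d d' : ℕ} (hk : 0 < k) (hkm : k ≤ m) (hmd : m ≤ d)
    (hsk : s * k ≤ d') {b a p : ℕ} (hb : b < s) (ha : a < m) :
    (Amat k s m d d' b a p)ᴴ * Amat k s m d d' b a p =
      diagonal (fun y : Fin d' => if ((y : ℕ) < s * k ∧ (y : ℕ) / k = b) then (1 : ℂ) else 0) := by
  have hm0 : 0 < m := lt_of_lt_of_le hk hkm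
  ext y y'
  rw [Matrix.mul_apply]
  simp only [Matrix.conjTranspose_apply]
  by_cases hyy : y = y'
  · subst hyy
    rw [Matrix.diagonal_apply_eq]
    by_cases hcond : ((y : ℕ) < s * k ∧ (y : ℕ) / k = b)
    · rw [if_pos hcond]
      rw [Finset.sum_eq_single
        (⟨(a + (y : ℕ) % k) % m, lt_of_lt_of_le (Nat.mod_lt _ hm0) hmd⟩ : Fin d)]
      · rw [Amat, Matrix.of_apply, if_pos ⟨Nat.mod_lt _ hm0, hcond.1, hcond.2, rfl⟩]
        rw [star_pow, star_ω, inv_pow, inv_mul_cancel₀ (pow_ne_zero _ (ω_ne_zero k))]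
      · intro x _ hx
        rw [Amat, Matrix.of_apply, if_neg, star_zero, zero_mul]
        rintro ⟨-, -, -, h4⟩
        exact hx (Fin.ext h4)
      · intro h; exact absurd (Finset.mem_univ _) h
    · rw [if_neg hcond]
      apply Finset.sum_eq_zero
      intro x _
      rw [Amat, Matrix.of_apply, if_neg, star_zero, zero_mul]
      rintro ⟨-, h2, h3, -⟩
      exact hcond ⟨h2, h3⟩
  · rw [Matrix.diagonal_apply_ne _ hyy]
    apply Finset.sum_eq_zero
    intro x _
    rw [Amat]
    simp only [Matrix.of_apply]
    by_cases hC : ((x : ℕ) < m ∧ (y : ℕ) < s * k ∧ (y : ℕ) / k = b ∧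
        (x : ℕ) = (a + (y : ℕ) % k) % m)
    · have h0 : (if ((x : ℕ) < m ∧ (y' : ℕ) < s * k ∧ (y' : ℕ) / k = b ∧
          (x : ℕ) = (a + (y' : ℕ) % k) % m) then ω k ^ (p * ((y' : ℕ) % k)) else 0) = 0 := by
        rw [if_neg]
        rintro ⟨-, h2', h3', h4'⟩
        apply hyy
        have hjj : (y : ℕ) % k = (y' : ℕ) % k :=
          mod_cancel (lt_of_lt_of_le (Nat.mod_lt _ hk) hkm)
            (lt_of_lt_of_le (Nat.mod_lt _ hk) hkm) (hC.2.2.2 ▸ h4')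
        apply Fin.ext
        have h5 : (y : ℕ) / k = (y' : ℕ) / k := by rw [hC.2.2.1, h3']
        calc (y : ℕ) = (y : ℕ) / k * k + (y : ℕ) % k := (Nat.div_add_mod' _ _).symm
          _ = (y' : ℕ) / k * k + (y' : ℕ) % k := by rw [hjj, h5]
          _ = (y' : ℕ) := Nat.div_add_mod' _ _
      rw [h0, mul_zero]
    · rw [if_neg hC, star_zero, zero_mul]

lemma card_tail (n c : ℕ) (hc : c ≤ n) :
    Fintype.card {x : Fin n // ¬ ((x : ℕ) < c)} = n - c := by
  rw [← Fintype.card_fin (n - c)]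
  apply Fintype.card_congr
  refine ⟨fun x => ⟨(x : Fin n) - c, by have := (x.1).isLt; have := x.2; omega⟩,
    fun j => ⟨⟨c + (j : ℕ), by have := j.isLt; omega⟩, by simp⟩, ?_, ?_⟩
  · intro x
    apply Subtype.ext; apply Fin.ext
    have := x.2
    simp only
    omega
  · intro j
    apply Fin.ext
    simp only
    omega

lemma rank_diag_tail (n c : ℕ) (hc : c ≤ n) :
    (diagonal (fun x : Fin n => if (x : ℕ) < c then (0 : ℂ) else 1)).rank = n - c := by
  rw [Matrix.rank_diagonal, ← card_tail n c hc]
  apply Fintype.card_congr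
  apply Equiv.subtypeEquivRight
  intro x
  by_cases h : (x : ℕ) < c <;> simp [h]

lemma rank_Amat {k s m d d' : ℕ} (hk : 0 < k) (hkm : k ≤ m) (hmd : m ≤ d)
    (hsk : s * k ≤ d') {b a p : ℕ} (hb : b < s) (ha : a < m) :
    (Amat k s m d d' b a p).rank = k := by
  rw [← Matrix.rank_conjTranspose_mul_self, Amat_conj_mul_self hk hkm hmd hsk hb ha,
    Matrix.rank_diagonal]
  have e1 : {y : Fin d' // (if ((y : ℕ) < s * k ∧ (y : ℕ) / k = b) then (1 : ℂ) else 0) ≠ 0}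
      ≃ {y : Fin d' // (y : ℕ) < s * k ∧ (y : ℕ) / k = b} := by
    apply Equiv.subtypeEquivRight
    intro y
    by_cases h : ((y : ℕ) < s * k ∧ (y : ℕ) / k = b) <;> simp [h]
  have e2 : {y : Fin d' // (y : ℕ) < s * k ∧ (y : ℕ) / k = b} ≃ Fin k :=
    { toFun := fun y => ⟨(y.1 : ℕ) % k, Nat.mod_lt _ hk⟩
      invFun := fun j => ⟨⟨b * k + (j : ℕ), lt2 hb hsk j.isLt⟩,
        ⟨lt2 hb le_rfl j.isLt, by
          show (b * k + (j : ℕ)) / k = b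
          rw [mul_comm, Nat.mul_add_div hk, Nat.div_eq_of_lt j.isLt, add_zero]⟩⟩
      left_inv := fun y => by
        apply Subtype.ext; apply Fin.ext
        show b * k + ((y.1 : ℕ)) % k = (y.1 : ℕ)
        have hy2 := y.2.2
        calc b * k + ((y.1 : ℕ)) % k = ((y.1 : ℕ)) / k * k + ((y.1 : ℕ)) % k := by rw [hy2]
          _ = (y.1 : ℕ) := Nat.div_add_mod' _ _
      right_inv := fun j => by
        apply Fin.ext
        show (b * k + (j : ℕ)) % k = (j : ℕ)
        rw [Nat.mul_add_mod', Nat.mod_eq_of_lt j.isLt] }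
  exact (Fintype.card_congr (e1.trans e2)).trans (Fintype.card_fin k)

lemma rank_add_le {d d' : ℕ} (A B : Matrix (Fin d) (Fin d') ℂ) :
    (A + B).rank ≤ A.rank + B.rank := by
  rw [Matrix.rank, Matrix.rank, Matrix.rank, Matrix.mulVecLin_add]
  have h1 : LinearMap.range (A.mulVecLin + B.mulVecLin)
      ≤ LinearMap.range A.mulVecLin ⊔ LinearMap.range B.mulVecLin := by
    rintro x ⟨v, rfl⟩
    exact Submodule.add_mem_sup (LinearMap.mem_range_self _ v) (LinearMap.mem_range_self _ v)
  exact (Submodule.finrank_mono h1).trans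
    (Submodule.finrank_add_le_finrank_add_finrank _ _)

lemma trace_Amat_Amat {k s m d d' : ℕ} (hk : 0 < k) (hkm : k ≤ m) (hmd : m ≤ d)
    (hsk : s * k ≤ d') {b b' a a' p p' : ℕ} (hb : b < s) (hb' : b' < s)
    (ha : a < m) (ha' : a' < m) (hp : p < k) (hp' : p' < k) :
    ((Amat k s m d d' b a p)ᴴ * Amat k s m d d' b' a' p').trace
      = if (b = b' ∧ a = a' ∧ p = p') then (k : ℂ) else 0 := by
  have hm0 : 0 < m := lt_of_lt_of_le hk hkm
  have hdiv : ∀ j : Fin k, (b * k + (j : ℕ)) / k = b := fun j => by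
    rw [mul_comm, Nat.mul_add_div hk, Nat.div_eq_of_lt j.isLt, add_zero]
  have hmod : ∀ j : Fin k, (b * k + (j : ℕ)) % k = (j : ℕ) := fun j => by
    rw [Nat.mul_add_mod', Nat.mod_eq_of_lt j.isLt]
  rw [trace_Amat hk hm0 hmd hsk hb a p]
  by_cases hba : b = b' ∧ a = a'
  · obtain ⟨rfl, rfl⟩ := hba
    have hstep : (∑ j : Fin k, star (ω k ^ (p * (j : ℕ))) *
        Amat k s m d d' b a p' ⟨(a + (j : ℕ)) % m, lt_of_lt_of_le (Nat.mod_lt _ hm0) hmd⟩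
          ⟨b * k + (j : ℕ), lt2 hb hsk j.isLt⟩)
        = ∑ j : Fin k, star (ω k ^ (p * (j : ℕ))) * ω k ^ (p' * (j : ℕ)) := by
      apply Finset.sum_congr rfl
      intro j _
      congr 1
      rw [Amat, Matrix.of_apply, if_pos, hmod j]
      exact ⟨Nat.mod_lt _ hm0, lt2 hb le_rfl j.isLt, hdiv j, by rw [hmod j]⟩
    rw [hstep, coeff hk hp hp']
    by_cases hpp : p = p' <;> simp [hpp]
  · rw [if_neg (by tauto)]
    apply Finset.sum_eq_zero
    intro j _
    rw [Amat, Matrix.of_apply, if_neg, mul_zero]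
    rintro ⟨-, -, h3, h4⟩
    apply hba
    refine ⟨(hdiv j).symm.trans h3, ?_⟩
    rw [hmod j] at h4
    exact mod_cancel' ha ha' h4

lemma Bzero {k s m d d' : ℕ} (hk : 0 < k) (hkm : k ≤ m) (hmd : m ≤ d)
    (hsk : s * k ≤ d') (B : Matrix (Fin d) (Fin d') ℂ)
    (hB : ∀ b a p : ℕ, b < s → a < m → p < k →
      ((Amat k s m d d' b a p)ᴴ * B).trace = 0)
    (x : Fin d) (y : Fin d') (hx : (x : ℕ) < m) (hy : (y : ℕ) < s * k) : B x y = 0 := by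
  have hm0 : 0 < m := lt_of_lt_of_le hk hkm
  have hb : (y : ℕ) / k < s := (Nat.div_lt_iff_lt_mul hk).mpr hy
  have hj₀ : (y : ℕ) % k < k := Nat.mod_lt _ hk
  have ha : ((x : ℕ) + m - (y : ℕ) % k) % m < m := Nat.mod_lt _ hm0
  set b : ℕ := (y : ℕ) / k with hbdef
  set j₀ : ℕ := (y : ℕ) % k with hj₀def
  set a : ℕ := ((x : ℕ) + m - j₀) % m with hadef
  have key : ∀ p : Fin k, ∑ j : Fin k, star (ω k ^ ((p : ℕ) * (j : ℕ))) *
      B ⟨(a + (j : ℕ)) % m, lt_of_lt_of_le (Nat.mod_lt _ hm0) hmd⟩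
        ⟨b * k + (j : ℕ), lt2 hb hsk j.isLt⟩ = 0 := by
    intro p
    have h := hB b a (p : ℕ) hb ha p.isLt
    rwa [trace_Amat hk hm0 hmd hsk hb a (p : ℕ)] at h
  have hxj : ((a + j₀) % m) = (x : ℕ) := by
    have h1 : (a + j₀) % m = ((x : ℕ) + m - j₀ + j₀) % m := Nat.mod_add_mod _ _ _
    rw [h1, show (x : ℕ) + m - j₀ + j₀ = (x : ℕ) + m by omega, Nat.add_mod_right,
      Nat.mod_eq_of_lt hx]
  have hyj : b * k + j₀ = (y : ℕ) := Nat.div_add_mod' _ _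
  have main : ∑ p : Fin k, ω k ^ ((p : ℕ) * j₀) *
      (∑ j : Fin k, star (ω k ^ ((p : ℕ) * (j : ℕ))) *
        B ⟨(a + (j : ℕ)) % m, lt_of_lt_of_le (Nat.mod_lt _ hm0) hmd⟩
          ⟨b * k + (j : ℕ), lt2 hb hsk j.isLt⟩) = (k : ℂ) * B x y := by
    have swap1 : ∑ p : Fin k, ω k ^ ((p : ℕ) * j₀) *
        (∑ j : Fin k, star (ω k ^ ((p : ℕ) * (j : ℕ))) *
          B ⟨(a + (j : ℕ)) % m, lt_of_lt_of_le (Nat.mod_lt _ hm0) hmd⟩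
            ⟨b * k + (j : ℕ), lt2 hb hsk j.isLt⟩)
        = ∑ j : Fin k, (∑ p : Fin k, ω k ^ ((p : ℕ) * j₀) * star (ω k ^ ((p : ℕ) * (j : ℕ)))) *
            B ⟨(a + (j : ℕ)) % m, lt_of_lt_of_le (Nat.mod_lt _ hm0) hmd⟩
              ⟨b * k + (j : ℕ), lt2 hb hsk j.isLt⟩ := by
      simp only [Finset.mul_sum]
      rw [Finset.sum_comm]
      refine Finset.sum_congr rfl (fun j _ => ?_)
      rw [Finset.sum_mul]
      exact Finset.sum_congr rfl (fun p _ => by ring)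
    rw [swap1]
    have coeffj : ∀ j : Fin k,
        (∑ p : Fin k, ω k ^ ((p : ℕ) * j₀) * star (ω k ^ ((p : ℕ) * (j : ℕ))))
          = if (j : ℕ) = j₀ then (k : ℂ) else 0 := by
      intro j
      have h1 : ∀ p : Fin k, ω k ^ ((p : ℕ) * j₀) * star (ω k ^ ((p : ℕ) * (j : ℕ)))
          = star (ω k ^ ((j : ℕ) * (p : ℕ))) * ω k ^ (j₀ * (p : ℕ)) := by
        intro p
        rw [mul_comm ((p : ℕ)) j₀, mul_comm ((p : ℕ)) ((j : ℕ)), mul_comm]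
      rw [Finset.sum_congr rfl (fun p _ => h1 p), coeff hk j.isLt hj₀]
    rw [Finset.sum_congr rfl (fun j _ => by rw [coeffj j])]
    have hcond : ∀ j : Fin k, ((j : ℕ) = j₀) = (j = (⟨j₀, hj₀⟩ : Fin k)) := by
      intro j
      simp [Fin.ext_iff]
    have e1 : ∀ (h1 : (a + j₀) % m < d) (h2 : b * k + j₀ < d'),
        B ⟨(a + j₀) % m, h1⟩ ⟨b * k + j₀, h2⟩ = B x y := by
      intro h1 h2
      rw [show (⟨(a + j₀) % m, h1⟩ : Fin d) = x from Fin.ext hxj,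
        show (⟨b * k + j₀, h2⟩ : Fin d') = y from Fin.ext hyj]
    simp only [hcond, ite_mul, zero_mul, Finset.sum_ite_eq', Finset.mem_univ, if_true]
    exact congrArg (fun z => (k : ℂ) * z) (e1 _ _)
  have h0 : (k : ℂ) * B x y = 0 := by
    rw [← main]
    exact Finset.sum_eq_zero (fun p _ => by rw [key p, mul_zero])
  have hk0 : (k : ℂ) ≠ 0 := Nat.cast_ne_zero.mpr hk.ne'
  exact (mul_eq_zero.mp h0).resolve_left hk0

end SUEBaux

open SUEBaux in
/-- Case (4): let `2 ≤ k ≤ d ≤ d'` with `k ∤ d'`, and write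
`d' = s·k + r`, `0 < r < k`. For every `t` with `0 ≤ t ≤ k-r-1` and `d-t ≥ k`, there
is an `s·k·(d-t)`-number USV1Bk in `M_{d×d'}`, consisting of matrices supported on
the top-left `(d-t) × s·k` submatrix. -/
theorem case4_SUEBk (k d d' s r : ℕ) (hk : 2 ≤ k) (hkd : k ≤ d) (hdd : d ≤ d')
    (hd' : d' = s * k + r) (hr1 : 0 < r) (hr2 : r < k)
    (t : ℕ) (ht : t ≤ k - r - 1) (ht2 : k ≤ d - t) :
    ∃ A : Fin (s * k * (d - t)) → Matrix (Fin d) (Fin d') ℂ,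
      (∀ m, IsSV1 k (A m)) ∧
      (∀ m n, ((A m)ᴴ * A n).trace = if m = n then (k : ℂ) else 0) ∧
      (∀ B : Matrix (Fin d) (Fin d') ℂ,
        (∀ m, ((A m)ᴴ * B).trace = 0) → ¬ IsSV1 k B) ∧
      (∀ m (x : Fin d) (y : Fin d'),
        d - t ≤ (x : ℕ) ∨ s * k ≤ (y : ℕ) → A m x y = 0) := by
  have hk0 : 0 < k := by omega
  have hmd : d - t ≤ d := Nat.sub_le _ _
  have hsk : s * k ≤ d' := by omega
  set E : (Fin s × Fin k) × Fin (d - t) ≃ Fin (s * k * (d - t)) :=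
    (finProdFinEquiv.prodCongr (Equiv.refl (Fin (d - t)))).trans finProdFinEquiv with hE
  refine ⟨fun i => Amat k s (d - t) d d'
      (((E.symm i).1.1 : ℕ)) (((E.symm i).2 : ℕ)) (((E.symm i).1.2 : ℕ)), ?_, ?_, ?_, ?_⟩
  · -- each matrix is SV1
    intro i
    constructor
    · rw [Amat_conj_mul_self hk0 ht2 hmd hsk (E.symm i).1.1.isLt (E.symm i).2.isLt,
        Matrix.diagonal_mul_diagonal]
      refine congrArg Matrix.diagonal (funext fun y => ?_)
      by_cases h : ((y : ℕ) < s * k ∧ (y : ℕ) / k = ((E.symm i).1.1 : ℕ)) <;> simp [h]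
    · exact rank_Amat hk0 ht2 hmd hsk (E.symm i).1.1.isLt (E.symm i).2.isLt
  · -- orthogonality
    intro i n
    rw [trace_Amat_Amat hk0 ht2 hmd hsk (E.symm i).1.1.isLt (E.symm n).1.1.isLt
      (E.symm i).2.isLt (E.symm n).2.isLt (E.symm i).1.2.isLt (E.symm n).1.2.isLt]
    by_cases h : i = n
    · subst h
      rw [if_pos ⟨rfl, rfl, rfl⟩, if_pos rfl]
    · rw [if_neg h, if_neg]
      rintro ⟨h1, h2, h3⟩
      apply h
      have hsymm : E.symm i = E.symm n :=
        Prod.ext (Prod.ext (Fin.ext h1) (Fin.ext h3)) (Fin.ext h2)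
      calc i = E (E.symm i) := (E.apply_symm_apply i).symm
        _ = E (E.symm n) := by rw [hsymm]
        _ = n := E.apply_symm_apply n
  · -- unextendibility
    intro B hB hSV1
    obtain ⟨-, hrank⟩ := hSV1
    have hBzero : ∀ (x : Fin d) (y : Fin d'),
        (x : ℕ) < d - t → (y : ℕ) < s * k → B x y = 0 := by
      intro x y hx hy
      refine Bzero hk0 ht2 hmd hsk B ?_ x y hx hy
      intro b a p hb ha hp
      have h := hB (E ((⟨b, hb⟩, ⟨p, hp⟩), ⟨a, ha⟩))
      simpa using h
    set B1 : Matrix (Fin d) (Fin d') ℂ :=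
      Matrix.of fun x y => if (x : ℕ) < d - t then 0 else B x y with hB1def
    set B2 : Matrix (Fin d) (Fin d') ℂ :=
      Matrix.of fun x y => if (x : ℕ) < d - t then B x y else 0 with hB2def
    have hsum : B = B1 + B2 := by
      ext x y
      simp only [hB1def, hB2def, Matrix.add_apply, Matrix.of_apply]
      by_cases h : (x : ℕ) < d - t <;> simp [h]
    have hrB1 : B1.rank ≤ t := by
      have hfac : B1 = diagonal (fun x : Fin d => if (x : ℕ) < d - t then (0 : ℂ) else 1) * B := by
        ext x y
        rw [Matrix.diagonal_mul]
        simp only [hB1def, Matrix.of_apply]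
        by_cases h : (x : ℕ) < d - t <;> simp [h]
      rw [hfac]
      refine (Matrix.rank_mul_le_left _ _).trans ?_
      rw [rank_diag_tail d (d - t) hmd]
      omega
    have hrB2 : B2.rank ≤ r := by
      have hfac : B2 = B2 * diagonal (fun y : Fin d' => if (y : ℕ) < s * k then (0 : ℂ) else 1) := by
        ext x y
        rw [Matrix.mul_diagonal]
        by_cases hy : (y : ℕ) < s * k
        · simp only [hy, if_true, mul_zero, hB2def, Matrix.of_apply]
          by_cases hx : (x : ℕ) < d - t
          · simp [hx, hBzero x y hx hy]
          · simp [hx]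
        · simp [hy]
      rw [hfac]
      refine (Matrix.rank_mul_le_right _ _).trans ?_
      rw [rank_diag_tail d' (s * k) hsk]
      omega
    have hle : B.rank ≤ t + r := by
      rw [hsum]
      exact (rank_add_le B1 B2).trans (add_le_add hrB1 hrB2)
    omega
  · -- support condition
    intro i x y h
    exact Amat_apply_zero h
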